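/- Let L_4 = U^{⊕3} ⊕ E8(-1)^{⊕2} ⊕ ⟨-6⟩ and let D ∈ L_4 be a primitive vector with D² < 0 such that the dual class r = D/div(D) ∈ L_4 ⊗ ℚ satisfies r² ≥ -7/2. Then the pair (D², div(D)) belongs to the set {(-14, 2), (-24, 3), (-78, 6), (-2, 1), (-6, 3), (-6, 6), (-6, 2)}. -/

import Mathlib

/-!
Write `D = x + a δ` with `x` in the unimodular part `K = U^3 ⊕ E8(-1)^2`. Unimodularity of `K`
makes `m = div(D)` divide `x`, and `m ∣ 6a`; primitivity makes `m` coprime to `a`, so `m ∣ 6`.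
Then `D² = m² (x/m)² - 6a²` with `(x/m)²` even since `K` is even, and `m² ∣ 3(a² - 1)` as `a` is
prime to `m ∣ 6`; hence `D² ≡ -6 (mod 2m²)`. For each `m ∈ {1, 2, 3, 6}` only the listed values
satisfy this congruence and `-7m²/2 ≤ D² < 0`.
-/

open Matrix

/-- Gram matrix of the hyperbolic plane `U`. -/
def U2 : Matrix (Fin 2) (Fin 2) ℤ := !![0, 1; 1, 0]

/-- Gram matrix of the negative definite `E8(-1)` lattice. -/
def E8neg : Matrix (Fin 8) (Fin 8) ℤ :=
  !![-2, 1, 0, 0, 0, 0, 0, 0;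
      1,-2, 1, 0, 0, 0, 0, 0;
      0, 1,-2, 1, 0, 0, 0, 0;
      0, 0, 1,-2, 1, 0, 0, 0;
      0, 0, 0, 1,-2, 1, 0, 1;
      0, 0, 0, 0, 1,-2, 1, 0;
      0, 0, 0, 0, 0, 1,-2, 0;
      0, 0, 0, 0, 1, 0, 0,-2]

/-- Index type of the unimodular summand `U^3 ⊕ E8(-1)^2`. -/
abbrev KIdx := (Fin 2 ⊕ (Fin 2 ⊕ Fin 2)) ⊕ (Fin 8 ⊕ Fin 8)

/-- Gram matrix of `U^3 ⊕ E8(-1)^2`. -/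
def GramK : Matrix KIdx KIdx ℤ :=
  Matrix.fromBlocks
    (Matrix.fromBlocks U2 0 0 (Matrix.fromBlocks U2 0 0 U2)) 0 0
    (Matrix.fromBlocks E8neg 0 0 E8neg)

/-- Index type of `L_n = U^3 ⊕ E8(-1)^2 ⊕ ⟨-(2n-2)⟩`. -/
abbrev LIdx := KIdx ⊕ Fin 1

/-- Gram matrix of `L_n = U^3 ⊕ E8(-1)^2 ⊕ ⟨-(2n-2)⟩`. -/
def GramL (n : ℕ) : Matrix LIdx LIdx ℤ :=
  Matrix.fromBlocks GramK 0 0 !![-(2 * (n : ℤ) - 2)]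

/-- The bilinear form of `L_n`. -/
def bil (n : ℕ) (v w : LIdx → ℤ) : ℤ := v ⬝ᵥ ((GramL n).mulVec w)

/-- The `ℚ`-bilinear extension of the form of `L_n` to `L_n ⊗ ℚ`. -/
def bilQ (n : ℕ) (v w : LIdx → ℚ) : ℚ :=
  v ⬝ᵥ (((GramL n).map (Int.cast : ℤ → ℚ)).mulVec w)

/-- The inclusion `L_n ↪ L_n ⊗ ℚ`. -/
def toQ (v : LIdx → ℤ) : LIdx → ℚ := fun i => (v i : ℚ)

/-- The generator `δ` of the summand `⟨-(2n-2)⟩`. -/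
def deltaVec : LIdx → ℤ := fun i => if i = Sum.inr 0 then 1 else 0

/-- A lattice vector is primitive if it is not a nontrivial multiple of
another lattice vector. -/
def IsPrimitive (v : LIdx → ℤ) : Prop :=
  ∀ (k : ℤ) (w : LIdx → ℤ), v = k • w → IsUnit k

/-- `HasDiv n v m` says that `div(v) = m`, i.e. `(v, L_n) = mℤ`. -/
def HasDiv (n : ℕ) (v : LIdx → ℤ) (m : ℤ) : Prop :=
  Ideal.span (Set.range fun w => bil n v w) = Ideal.span {m}

theorem even_dotProduct_mulVec_self {ι : Type*} [Fintype ι] {G : Matrix ι ι ℤ} (hG : G.IsSymm)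
    (hdiag : ∀ i, Even (G i i)) (v : ι → ℤ) : Even (v ⬝ᵥ G *ᵥ v) := by
  rw [← ZMod.intCast_eq_zero_iff_even]
  have hexpand : v ⬝ᵥ G *ᵥ v = ∑ p : ι × ι, v p.1 * G p.1 p.2 * v p.2 := by
    simp only [dotProduct, mulVec, Finset.mul_sum, Fintype.sum_prod_type, mul_assoc]
  rw [hexpand]
  push_cast
  -- in characteristic 2 the off-diagonal terms cancel in pairs and the diagonal ones vanish
  refine Finset.sum_ninvolution Prod.swap (fun ⟨i, j⟩ => ?_) (fun ⟨i, j⟩ hij hswap => hij ?_)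
    (by simp) (by simp)
  · simp only [Prod.swap_prod_mk, hG.apply i j]
    ring_nf
    reduce_mod_char
  · obtain rfl : j = i := congrArg Prod.fst hswap
    simp [(ZMod.intCast_eq_zero_iff_even).2 (hdiag j)]

theorem dvd_of_forall_dvd_vecMul {R ι : Type*} [CommSemiring R] [Fintype ι] [DecidableEq ι]
    {G H : Matrix ι ι R} (hGH : G * H = 1) {x : ι → R} {m : R} (h : ∀ j, m ∣ (x ᵥ* G) j)
    (i : ι) : m ∣ x i := by
  rw [← vecMul_one x, ← hGH, ← vecMul_vecMul]
  exact Finset.dvd_sum fun j _ => (h j).mul_right _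

theorem sq_dvd_three_mul_sq_sub_one {m a : ℤ} (hm : 0 < m) (hm6 : m ∣ 6) (ha : IsCoprime m a) :
    m ^ 2 ∣ 3 * (a ^ 2 - 1) := by
  have h4 : IsCoprime 2 a → 4 ∣ a ^ 2 - 1 := fun h2 => by
    have h2a : ¬2 ∣ a := Int.prime_two.coprime_iff_not_dvd.1 h2
    have := Int.sq_mod_four_eq_one_of_odd (x := a) (Int.odd_iff.2 (by omega))
    omega
  have h3 : IsCoprime 3 a → 3 ∣ a ^ 2 - 1 := fun h3a =>
    (Int.ModEq.pow_card_sub_one_eq_one Nat.prime_three h3a.symm).symm.dvd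
  have hm_le : m ≤ 6 := Int.le_of_dvd (by norm_num) hm6
  interval_cases m
  · simp
  · have := h4 ha
    omega
  · have := h3 ha
    omega
  · omega
  · omega
  · have ha : IsCoprime (2 * 3) a := ha
    have := h4 ha.of_mul_left_left
    have := h3 ha.of_mul_left_right
    omega

def E8negInv : Matrix (Fin 8) (Fin 8) ℤ :=
  !![-2, -3, -4, -5, -6, -4, -2, -3;
     -3, -6, -8, -10, -12, -8, -4, -6;
     -4, -8, -12, -15, -18, -12, -6, -9;
     -5, -10, -15, -20, -24, -16, -8, -12;
     -6, -12, -18, -24, -30, -20, -10, -15;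
     -4, -8, -12, -16, -20, -14, -7, -10;
     -2, -4, -6, -8, -10, -7, -4, -5;
     -3, -6, -9, -12, -15, -10, -5, -8]

def GramKInv : Matrix KIdx KIdx ℤ :=
  Matrix.fromBlocks
    (Matrix.fromBlocks U2 0 0 (Matrix.fromBlocks U2 0 0 U2)) 0 0
    (Matrix.fromBlocks E8negInv 0 0 E8negInv)

theorem U2_mul_self : U2 * U2 = 1 := by decide

theorem E8neg_mul_E8negInv : E8neg * E8negInv = 1 := by decide

theorem GramK_mul_GramKInv : GramK * GramKInv = 1 := by
  simp [GramK, GramKInv, fromBlocks_multiply, U2_mul_self, E8neg_mul_E8negInv, fromBlocks_one]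

theorem GramK_isSymm : GramK.IsSymm := by
  have hU : U2.IsSymm := by decide
  have hE : E8neg.IsSymm := by decide
  exact .fromBlocks (.fromBlocks hU (by simp) (.fromBlocks hU (by simp) hU)) (by simp)
    (.fromBlocks hE (by simp) hE)

theorem GramK_apply_self_even : ∀ i, Even (GramK i i) := by decide

theorem vecMul_GramL (n : ℕ) (v : LIdx → ℤ) :
    v ᵥ* GramL n = Sum.elim ((v ∘ Sum.inl) ᵥ* GramK) fun _ => -(2 * (n : ℤ) - 2) * v (.inr 0) := by
  ext (i | i)
  · simp [GramL, vecMul_fromBlocks]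
  · simp [GramL, vecMul, dotProduct, mul_comm]

theorem bil_self (n : ℕ) (v : LIdx → ℤ) :
    bil n v v = (v ∘ Sum.inl) ⬝ᵥ GramK *ᵥ (v ∘ Sum.inl) - (2 * n - 2) * v (.inr 0) ^ 2 := by
  have hv : v = Sum.elim (v ∘ Sum.inl) (v ∘ Sum.inr) := by ext (i | i) <;> rfl
  rw [bil, dotProduct_mulVec, vecMul_GramL]
  nth_rewrite 3 [hv]
  rw [sumElim_dotProduct_sumElim, dotProduct_mulVec]
  simp only [dotProduct, Function.comp_apply, Finset.univ_unique, Fin.default_eq_zero,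
    Finset.sum_singleton]
  ring

theorem IsPrimitive.isUnit_of_forall_dvd {v : LIdx → ℤ} (hv : IsPrimitive v) {k : ℤ}
    (hk : ∀ i, k ∣ v i) : IsUnit k :=
  hv k (fun i => v i / k) (funext fun i => (Int.mul_ediv_cancel' (hk i)).symm)

namespace HasDiv

variable {n : ℕ} {v : LIdx → ℤ} {m : ℤ}

theorem dvd_bil (h : HasDiv n v m) (w : LIdx → ℤ) : m ∣ bil n v w := by
  rw [← Ideal.mem_span_singleton, ← h]
  exact Ideal.subset_span ⟨w, rfl⟩

theorem dvd_vecMul_GramL (h : HasDiv n v m) (j : LIdx) : m ∣ (v ᵥ* GramL n) j := by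
  simpa only [bil, dotProduct_mulVec, dotProduct_single, mul_one] using h.dvd_bil (Pi.single j 1)

-- `U^3 ⊕ E8(-1)^2` is unimodular, so `div(v)` divides its component there.
theorem dvd_apply_inl (h : HasDiv n v m) (i : KIdx) : m ∣ v (.inl i) :=
  dvd_of_forall_dvd_vecMul GramK_mul_GramKInv (x := v ∘ Sum.inl)
    (fun j => by simpa [vecMul_GramL] using h.dvd_vecMul_GramL (.inl j)) i

theorem isCoprime_apply_inr (hv : IsPrimitive v) (h : HasDiv n v m) : IsCoprime m (v (.inr 0)) := by
  rw [Int.isCoprime_iff_gcd_eq_one, ← Int.natAbs_natCast (Int.gcd _ _), ← Int.isUnit_iff_natAbs_eq]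
  refine hv.isUnit_of_forall_dvd fun
    | .inl i => (Int.gcd_dvd_left m _).trans (h.dvd_apply_inl i)
    | .inr 0 => Int.gcd_dvd_right m _

theorem dvd_two_mul_sub_two (hv : IsPrimitive v) (h : HasDiv n v m) : m ∣ 2 * (n : ℤ) - 2 := by
  have := h.dvd_vecMul_GramL (.inr 0)
  rw [vecMul_GramL, Sum.elim_inr, neg_mul, dvd_neg] at this
  exact (h.isCoprime_apply_inr hv).dvd_of_dvd_mul_right this

theorem exists_bil_self_eq (h : HasDiv n v m) : ∃ q, Even q ∧
    bil n v v = m ^ 2 * q - (2 * n - 2) * v (.inr 0) ^ 2 := by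
  choose x hx using h.dvd_apply_inl
  have hvx : v ∘ Sum.inl = m • x := funext hx
  refine ⟨x ⬝ᵥ GramK *ᵥ x, even_dotProduct_mulVec_self GramK_isSymm GramK_apply_self_even x, ?_⟩
  rw [bil_self, hvx, mulVec_smul, smul_dotProduct, dotProduct_smul, smul_eq_mul, smul_eq_mul]
  ring

theorem two_mul_sq_dvd_bil_four_add_six (hv : IsPrimitive v) (h : HasDiv 4 v m) (hm : 0 < m) : 2 * m ^ 2 ∣ bil 4 v v + 6 := by
  obtain ⟨q, ⟨q', rfl⟩, hq⟩ := h.exists_bil_self_eq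
  have hm6 : m ∣ 6 := by simpa using h.dvd_two_mul_sub_two hv
  obtain ⟨c, hc⟩ := sq_dvd_three_mul_sq_sub_one hm hm6 (h.isCoprime_apply_inr hv)
  exact ⟨q' - c, by rw [hq]; push_cast; linear_combination (-2) * hc⟩

end HasDiv

/-- in `L_4`, a primitive vector `D` with `D² < 0` whose dual class
`r = D/div(D)` satisfies `r² ≥ -7/2` has `(D², div(D))` in the given list. -/
theorem stmt_8 (D : LIdx → ℤ) (hprim : IsPrimitive D) (m : ℤ) (hm : 0 < m)
    (hdiv : HasDiv 4 D m) (hneg : bil 4 D D < 0)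
    (hr : (-7 / 2 : ℚ) ≤ (bil 4 D D : ℚ) / (m : ℚ) ^ 2) :
    (bil 4 D D = -14 ∧ m = 2) ∨ (bil 4 D D = -24 ∧ m = 3) ∨
    (bil 4 D D = -78 ∧ m = 6) ∨ (bil 4 D D = -2 ∧ m = 1) ∨
    (bil 4 D D = -6 ∧ m = 3) ∨ (bil 4 D D = -6 ∧ m = 6) ∨
    (bil 4 D D = -6 ∧ m = 2) := by
  have hm6 : m ∣ 6 := by simpa using hdiv.dvd_two_mul_sub_two hprim
  obtain ⟨k, hk⟩ := hdiv.two_mul_sq_dvd_bil_four_add_six hprim hm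
  have hr' : -7 * m ^ 2 ≤ 2 * bil 4 D D := by
    rw [le_div_iff₀ (by positivity)] at hr
    exact_mod_cast (by linarith : (-7 * m ^ 2 : ℚ) ≤ 2 * bil 4 D D)
  have hm_le : m ≤ 6 := Int.le_of_dvd (by norm_num) hm6
  interval_cases m <;> omega
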